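/- arXiv:0807.0796 — 6 statements merged into one kernel-verified Lean document; each statement's English description precedes it below -/
import Mathlib

section
/- Let X be a non-empty compact, locally connected Hausdorff space and φ : X → ℝ continuous. For every (u,v) with u < v, the number of connected components of the sublevel set X_v = {p ∈ X : φ(p) ≤ v} that contain at least one point of X_u = {p ∈ X : φ(p) ≤ u} is finite. -/
/-!
In a locally connected space the components of the open set `{φ < v}` are open, so finitely
many of them cover the compact set `X_u`. Each of them is a connected subset of `X_v`, hence
lies in a single component of `X_v`, and every component of `X_v` meeting `X_u` is among these.
-/

open Set

theorem connectedComponent_eq_of_mem_connectedComponentIn {X : Type*} [TopologicalSpace X]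
    {U V : Set X} (hUV : U ⊆ V) {p q : V} (hpq : (p : X) ∈ connectedComponentIn U q) :
    connectedComponent p = connectedComponent q := by
  have hpV : (p : X) ∈ (↑) '' connectedComponent q := by
    rw [← connectedComponentIn_eq_image q.2]
    exact connectedComponentIn_mono _ hUV hpq
  rw [Subtype.val_injective.mem_set_image] at hpV
  exact (connectedComponent_eq hpV).symm

theorem finite_connectedComponent_of_isCompact_subset_isOpen {X : Type*} [TopologicalSpace X]
    [LocallyConnectedSpace X] {K U V : Set X} (hK : IsCompact K) (hU : IsOpen U)
    (hKU : K ⊆ U) (hUV : U ⊆ V) :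
    {C : Set V | ∃ p : V, (p : X) ∈ K ∧ C = connectedComponent p}.Finite := by
  have hcover : K ⊆ ⋃ q ∈ K, connectedComponentIn U q := fun x hx =>
    mem_biUnion hx (mem_connectedComponentIn (hKU hx))
  obtain ⟨t, -, htfin, htcover⟩ :=
    hK.elim_finite_subcover_image (fun _ _ => hU.connectedComponentIn) hcover
  refine ((htfin.preimage Subtype.val_injective.injOn).image connectedComponent).subset ?_
  rintro C ⟨p, hpK, rfl⟩
  obtain ⟨q, hqt, hpq⟩ := mem_iUnion₂.mp (htcover hpK)
  have hqU : q ∈ U := connectedComponentIn_nonempty_iff.mp ⟨_, hpq⟩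
  exact ⟨⟨q, hUV hqU⟩, hqt,
    (connectedComponent_eq_of_mem_connectedComponentIn (q := ⟨q, hUV hqU⟩) hUV hpq).symm⟩

theorem sizeFunction_finite_general {X : Type*} [TopologicalSpace X] [CompactSpace X]
    [LocallyConnectedSpace X] {φ : X → ℝ} (hφ : Continuous φ)
    {u v : ℝ} (huv : u < v) :
    {C : Set ↥{x : X | φ x ≤ v} |
      ∃ p : ↥{x : X | φ x ≤ v}, φ (p : X) ≤ u ∧ C = connectedComponent p}.Finite :=
  finite_connectedComponent_of_isCompact_subset_isOpen (U := {x | φ x < v})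
    (isClosed_le hφ continuous_const).isCompact (isOpen_lt hφ continuous_const)
    (fun _ hx => lt_of_le_of_lt hx huv) fun _ hx => le_of_lt (show φ _ < v from hx)

/-- for a size pair `(X, φ)` (X nonempty compact, locally connected,
Hausdorff; φ continuous) and `u < v`, the number of connected components of the sublevel
set `X_v = {φ ≤ v}` containing at least one point of `X_u = {φ ≤ u}` is finite. -/
theorem sizeFunction_finite {X : Type*} [TopologicalSpace X] [CompactSpace X] [T2Space X]
    [LocallyConnectedSpace X] [Nonempty X] {φ : X → ℝ} (hφ : Continuous φ)
    {u v : ℝ} (huv : u < v) :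
    {C : Set ↥{x : X | φ x ≤ v} |
      ∃ p : ↥{x : X | φ x ≤ v}, φ (p : X) ≤ u ∧ C = connectedComponent p}.Finite :=
  sizeFunction_finite_general hφ huv
end

section
/- Let (X, φ) be a size pair. For every pair u < v, the size function value ℓ_{(X,φ)}(u,v) equals the rank of the 0-th persistent Čech homology group with field coefficients, i.e., the rank of the image of the homomorphism ι_0^{u,v} : Ȟ_0(X_u) → Ȟ_0(X_v) induced by the inclusion X_u ↪ X_v. -/
universe u v

/-- An abstract packaging of (degree-0) Čech homology with coefficients in a field `K`,
applied to the subspaces of a topological space `X`: absolute groups `Ȟ₀(S)`, relative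
groups `Ȟ₀(T, S)`, inclusion-induced homomorphisms, together with the standard
properties of Čech homology on compact Hausdorff pairs with field coefficients
(rank `Ȟ₀` = number of connected components, functoriality, exactness of the final part
of the homology sequence of a pair). -/
structure CechTheory (X : Type u) [TopologicalSpace X] (K : Type v) [Field K] where
  /-- the 0-th Čech homology group of a subspace -/
  H0 : Set X → Type v
  [h0Add : ∀ S : Set X, AddCommGroup (H0 S)]
  [h0Mod : ∀ S : Set X, Module K (H0 S)]
  /-- the relative 0-th Čech homology group `Ȟ₀(T, S)` -/
  H0rel : Set X → Set X → Type v
  [h0relAdd : ∀ T S : Set X, AddCommGroup (H0rel T S)]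
  [h0relMod : ∀ T S : Set X, Module K (H0rel T S)]
  /-- the homomorphism induced by an inclusion of subspaces -/
  map : ∀ {S T : Set X}, S ⊆ T → (H0 S →ₗ[K] H0 T)
  /-- the homomorphism induced by an inclusion of pairs -/
  maprel : ∀ {T S T' S' : Set X}, T ⊆ T' → S ⊆ S' → (H0rel T S →ₗ[K] H0rel T' S')
  /-- the natural map `Ȟ₀(T) → Ȟ₀(T, S)` -/
  quot : ∀ T S : Set X, H0 T →ₗ[K] H0rel T S
  map_comp : ∀ {S T U : Set X} (h₁ : S ⊆ T) (h₂ : T ⊆ U),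
    (map h₂).comp (map h₁) = map (h₁.trans h₂)
  /-- the homology class of a point -/
  cls : ∀ S : Set X, S → H0 S
  map_cls : ∀ {S T : Set X} (h : S ⊆ T) (x : S), map h (cls S x) = cls T ⟨x.1, h x.2⟩
  cls_eq_iff : ∀ S : Set X, IsCompact S → ∀ x y : S,
    (cls S x = cls S y ↔ connectedComponent x = connectedComponent y)
  cls_span : ∀ S : Set X, IsCompact S →
    Submodule.span K (Set.range (cls S)) = ⊤
  cls_indep : ∀ S : Set X, IsCompact S → ∀ f : ConnectedComponents ↥S → ↥S,
    (∀ c, ConnectedComponents.mk (f c) = c) →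
    LinearIndependent K fun c => cls S (f c)
  quot_surjective : ∀ T S : Set X, S ⊆ T → Function.Surjective (quot T S)
  exact_pair : ∀ {S T : Set X} (h : S ⊆ T),
    LinearMap.range (map h) = LinearMap.ker (quot T S)

attribute [instance] CechTheory.h0Add CechTheory.h0Mod CechTheory.h0relAdd
  CechTheory.h0relMod

/-- The size function of a size pair: `sizeFun φ u v` is the number of connected
components of the sublevel set `X_v = {φ ≤ v}` containing at least one point of
`X_u = {φ ≤ u}`. -/
noncomputable def sizeFun {X : Type u} [TopologicalSpace X] (φ : X → ℝ) (u v : ℝ) : ℕ :=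
  Set.ncard {C : Set ↥{x : X | φ x ≤ v} |
    ∃ p : ↥{x : X | φ x ≤ v}, φ (p : X) ≤ u ∧ C = connectedComponent p}

/-!
The classes of points of `X_v` form a basis of `Ȟ₀(X_v)` indexed by the connected components
of `X_v`, and `ι₀^{u,v}` sends the class of a point of `X_u` to the class of the same point in
`X_v`. Hence the image of `ι₀^{u,v}` is spanned by a linearly independent family indexed by the
components of `X_v` that meet `X_u`, and its rank is their number `ℓ_{(X,φ)}(u,v)`.
-/

open Set Submodule

theorem LinearIndepOn.finrank_span_image {R M ι : Type*} [Ring R] [StrongRankCondition R]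
    [AddCommGroup M] [Module R M] {f : ι → M} {s : Set ι} (hs : LinearIndepOn R f s) :
    Module.finrank R (span R (f '' s)) = s.ncard := by
  rw [Module.finrank, ← Cardinal.toNat_toENat, toENat_rank_span_set hs, Set.ncard_def]

theorem ncard_setOf_connectedComponent {Y : Type*} [TopologicalSpace Y] (A : Set Y) :
    {C : Set Y | ∃ p ∈ A, C = connectedComponent p}.ncard =
      (ConnectedComponents.mk '' A).ncard := by
  have hfiber :
      Function.Injective fun c : ConnectedComponents Y => ConnectedComponents.mk ⁻¹' {c} :=
    (preimage_injective.2 ConnectedComponents.surjective_coe).comp singleton_injective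
  have hset : {C : Set Y | ∃ p ∈ A, C = connectedComponent p} =
      (fun c => ConnectedComponents.mk ⁻¹' {c}) '' (ConnectedComponents.mk '' A) := by
    ext C
    simp only [image_image, connectedComponents_preimage_singleton, mem_ofPred_eq, mem_image,
      eq_comm]
  rw [hset, ncard_image_of_injective _ hfiber]

namespace CechTheory

variable {X : Type u} [TopologicalSpace X] {K : Type v} [Field K] (C : CechTheory X K)

noncomputable def componentCls (S : Set X) (c : ConnectedComponents S) : C.H0 S :=
  C.cls S (Function.surjInv ConnectedComponents.surjective_coe c)

variable {C} {S T : Set X}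

theorem componentCls_coe (hS : IsCompact S) (x : S) : C.componentCls S x = C.cls S x :=
  (C.cls_eq_iff S hS _ x).2
    (ConnectedComponents.coe_eq_coe.1 (Function.surjInv_eq ConnectedComponents.surjective_coe _))

theorem linearIndependent_componentCls (hS : IsCompact S) :
    LinearIndependent K (C.componentCls S) :=
  C.cls_indep S hS _ (Function.surjInv_eq ConnectedComponents.surjective_coe)

theorem range_map_eq_span_componentCls (hS : IsCompact S) (hT : IsCompact T) (h : S ⊆ T) :
    LinearMap.range (C.map h) =
      span K (C.componentCls T '' (ConnectedComponents.mk '' ((↑) ⁻¹' S : Set T))) := by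
  rw [LinearMap.range_eq_map, ← C.cls_span S hS, map_span, ← range_comp, image_image]
  congr 1
  ext z
  simp only [mem_range, mem_image, Function.comp_apply, C.map_cls, componentCls_coe hT]
  exact ⟨fun ⟨x, hx⟩ => ⟨⟨x, h x.2⟩, x.2, hx⟩,
    fun ⟨x, hx, hz⟩ => ⟨⟨x, hx⟩, hz⟩⟩

theorem finrank_range_map (hS : IsCompact S) (hT : IsCompact T) (h : S ⊆ T) :
    Module.finrank K (LinearMap.range (C.map h)) =
      (ConnectedComponents.mk '' ((↑) ⁻¹' S : Set T)).ncard := by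
  rw [range_map_eq_span_componentCls hS hT h,
    ((linearIndependent_componentCls hT).linearIndepOn _).finrank_span_image]

end CechTheory

theorem sizeFun_eq_rank_persistent_general {X : Type u} [TopologicalSpace X] [CompactSpace X]
    {K : Type v} [Field K]
    (C : CechTheory X K) {φ : X → ℝ} (hφ : Continuous φ) {u v : ℝ} (huv : u < v) :
    sizeFun φ u v = Module.finrank K
      (LinearMap.range (C.map (show {x : X | φ x ≤ u} ⊆ {x : X | φ x ≤ v} from
        fun x hx => le_trans hx huv.le))) := by
  have isCompact_sublevel (w : ℝ) : IsCompact {x : X | φ x ≤ w} :=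
    (isClosed_le hφ continuous_const).isCompact
  rw [CechTheory.finrank_range_map (isCompact_sublevel u) (isCompact_sublevel v)]
  exact ncard_setOf_connectedComponent _

/-- Corollary 3.8: for a size pair `(X, φ)` and `u < v`, the value
`ℓ_{(X,φ)}(u,v)` of the size function equals the rank of the 0-th persistent Čech
homology group, i.e. the rank of the image of `ι₀^{u,v} : Ȟ₀(X_u) → Ȟ₀(X_v)`. -/
theorem sizeFun_eq_rank_persistent {X : Type u} [TopologicalSpace X] [CompactSpace X]
    [T2Space X] [LocallyConnectedSpace X] [Nonempty X] {K : Type v} [Field K]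
    (C : CechTheory X K) {φ : X → ℝ} (hφ : Continuous φ) {u v : ℝ} (huv : u < v) :
    sizeFun φ u v = Module.finrank K
      (LinearMap.range (C.map (show {x : X | φ x ≤ u} ⊆ {x : X | φ x ≤ v} from
        fun x hx => le_trans hx huv.le))) :=
  sizeFun_eq_rank_persistent_general C hφ huv
end

section
/- Let (X, φ) be a size pair with at most finitely many homological 0-critical values, and let w be a homological 0-critical value. If the inclusion-induced map ι_0^{w−ε, w+ε} : Ȟ_0(X_{w−ε}) → Ȟ_0(X_{w+ε}) is not surjective for any sufficiently small ε > 0, then there exists v > w such that w is a discontinuity point of the function u ↦ ℓ_{(X,φ)}(u, v). -/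
universe u v

/-- `w` is a homological 0-critical value for the size pair `(X, φ)`: for every
sufficiently small `ε > 0`, the map `ι₀^{w-ε,w+ε} : Ȟ₀(X_{w-ε}) → Ȟ₀(X_{w+ε})` induced by
inclusion is not an isomorphism. -/
def CechTheory.IsHomCritical {X : Type u} [TopologicalSpace X] {K : Type v} [Field K]
    (C : CechTheory X K) (φ : X → ℝ) (w : ℝ) : Prop :=
  ∃ ε₀ > (0 : ℝ), ∀ ε : ℝ, ∀ hε : 0 < ε, ε < ε₀ →
    ¬ Function.Bijective (C.map (show {x : X | φ x ≤ w - ε} ⊆ {x : X | φ x ≤ w + ε} from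
      fun x (hx : φ x ≤ w - ε) => show φ x ≤ w + ε from le_trans hx (by linarith)))

/-!
Choose `v > w` so close to `w` that `(w, v]` contains no critical value. At a non-critical
level `t`, `ι₀^{t-η,t+η}` is bijective for some small `η`, so the components of `X_{t-η}` inject
into those of `X_{t+η}`; an infimum argument then gives levels `s = w + ε` arbitrarily close
to `w` whose components inject into those of `X_v`. Since `ι₀^{w-ε,w+ε}` is not surjective,
some component of `X_s` misses `X_{w-ε}`, and by injectivity the component of `X_v` containing
it is counted by `ℓ(s, v)` but not by `ℓ(w - ε, v)`. Hence `ℓ(·, v)` jumps by at least one across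
every neighbourhood of `w`.
-/

open Set Filter Topology Function

namespace ConnectedComponents

variable {X : Type u} [TopologicalSpace X]

noncomputable def inclusion {S T : Set X} (h : S ⊆ T) :
    ConnectedComponents S → ConnectedComponents T :=
  (continuous_inclusion h).connectedComponentsMap

lemma inclusion_comp_inclusion {S T U : Set X} (h₁ : S ⊆ T) (h₂ : T ⊆ U) :
    inclusion h₂ ∘ inclusion h₁ = inclusion (h₁.trans h₂) := by
  ext c
  obtain ⟨x, rfl⟩ := surjective_coe c
  rfl

lemma inclusion_refl (S : Set X) : inclusion (subset_refl S) = id := by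
  ext c
  obtain ⟨x, rfl⟩ := surjective_coe c
  rfl

end ConnectedComponents

section Components

variable {X : Type u} [TopologicalSpace X]

lemma connectedComponent_mem_nhds_of_mem_interior [LocallyConnectedSpace X] {S : Set X}
    {x : S} (hx : (x : X) ∈ interior S) : connectedComponent x ∈ 𝓝 x := by
  have hsub :
      Subtype.val ⁻¹' connectedComponentIn (interior S) (x : X) ⊆ connectedComponent x := by
    intro y hy
    have hyS := connectedComponentIn_mono (x : X) interior_subset hy
    rw [connectedComponentIn_eq_image x.2] at hyS
    obtain ⟨z, hz, hzy⟩ := hyS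
    rwa [← Subtype.ext hzy]
  refine mem_of_superset ?_ hsub
  exact (isOpen_interior.connectedComponentIn.preimage continuous_subtype_val).mem_nhds
    (mem_connectedComponentIn hx)

lemma IsCompact.finite_image_connectedComponent {K : Set X} (hK : IsCompact K)
    (h : ∀ x ∈ K, connectedComponent x ∈ 𝓝 x) : (connectedComponent '' K).Finite := by
  obtain ⟨t, htK, hcover⟩ := hK.elim_nhds_subcover (fun x => connectedComponent x) h
  refine (t.finite_toSet.image connectedComponent).subset ?_
  rintro _ ⟨y, hyK, rfl⟩
  obtain ⟨x, hxt, hyx⟩ := mem_iUnion₂.mp (hcover hyK)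
  exact ⟨x, hxt, connectedComponent_eq hyx⟩

end Components

namespace CechTheory

variable {X : Type u} [TopologicalSpace X] {K : Type v} [Field K] (C : CechTheory X K)

lemma surjective_map_of_surjective_inclusion {S T : Set X} (hT : IsCompact T) (h : S ⊆ T)
    (hs : Surjective (ConnectedComponents.inclusion h)) : Surjective (C.map h) := by
  rw [← LinearMap.range_eq_top, eq_top_iff, ← C.cls_span T hT, Submodule.span_le]
  rintro _ ⟨y, rfl⟩
  obtain ⟨c, hc⟩ := hs (.mk y)
  obtain ⟨x, rfl⟩ := ConnectedComponents.surjective_coe c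
  refine ⟨C.cls S x, ?_⟩
  rw [C.map_cls, C.cls_eq_iff T hT]
  exact ConnectedComponents.coe_eq_coe.mp hc

lemma injective_inclusion_of_injective_map {S T : Set X} (hS : IsCompact S) (hT : IsCompact T)
    (h : S ⊆ T) (hi : Injective (C.map h)) : Injective (ConnectedComponents.inclusion h) := by
  refine ConnectedComponents.surjective_coe.forall₂.2 fun x y hxy => ?_
  rw [ConnectedComponents.coe_eq_coe, ← C.cls_eq_iff S hS]
  apply hi
  rw [C.map_cls, C.map_cls, C.cls_eq_iff T hT]
  exact ConnectedComponents.coe_eq_coe.mp hxy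

end CechTheory

lemma sublevel_mono {X : Type u} (φ : X → ℝ) {a b : ℝ} (h : a ≤ b) :
    {x | φ x ≤ a} ⊆ {x | φ x ≤ b} :=
  fun _ hx => le_trans hx h

section Sublevel

variable {X : Type u} [TopologicalSpace X]

lemma isCompact_sublevel [CompactSpace X] {φ : X → ℝ} (hφ : Continuous φ) (a : ℝ) :
    IsCompact {x | φ x ≤ a} :=
  (isClosed_le hφ continuous_const).isCompact

/-- Quantifying over the (unique) proof of `X_a ⊆ X_b` keeps the levels free of proof terms. -/
def ComponentsInjective (φ : X → ℝ) (a b : ℝ) : Prop :=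
  ∀ h : {x | φ x ≤ a} ⊆ {x | φ x ≤ b}, Injective (ConnectedComponents.inclusion h)

lemma componentsInjective_refl (φ : X → ℝ) (a : ℝ) : ComponentsInjective φ a a := fun _ => by
  rw [ConnectedComponents.inclusion_refl]
  exact injective_id

variable {φ : X → ℝ} {a b c : ℝ}

lemma ComponentsInjective.trans (hab : a ≤ b) (hbc : b ≤ c) (h₁ : ComponentsInjective φ a b)
    (h₂ : ComponentsInjective φ b c) : ComponentsInjective φ a c := fun _ => by
  rw [← ConnectedComponents.inclusion_comp_inclusion (sublevel_mono φ hab) (sublevel_mono φ hbc)]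
  exact (h₂ _).comp (h₁ _)

lemma ComponentsInjective.of_trans (hab : a ≤ b) (hbc : b ≤ c)
    (h : ComponentsInjective φ a c) : ComponentsInjective φ a b := fun _ => by
  have := h ((sublevel_mono φ hab).trans (sublevel_mono φ hbc))
  rw [← ConnectedComponents.inclusion_comp_inclusion _ (sublevel_mono φ hbc)] at this
  exact this.of_comp

lemma CechTheory.exists_componentsInjective_of_not_isHomCritical [CompactSpace X] {K : Type v}
    [Field K] (C : CechTheory X K) (hφ : Continuous φ) {t : ℝ} (ht : ¬ C.IsHomCritical φ t)
    {ε₀ : ℝ} (hε₀ : 0 < ε₀) :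
    ∃ η, 0 < η ∧ η < ε₀ ∧ ComponentsInjective φ (t - η) (t + η) := by
  unfold CechTheory.IsHomCritical at ht
  push Not at ht
  obtain ⟨η, hη, hηε₀, hbij⟩ := ht ε₀ hε₀
  exact ⟨η, hη, hηε₀, fun _ => C.injective_inclusion_of_injective_map
    (isCompact_sublevel hφ _) (isCompact_sublevel hφ _) _ hbij.injective⟩

/-- The infimum of the levels in `(w, v]` whose components inject into those of `X_v` is `w`:
at any larger infimum `hloc` would push injectivity below it. -/
lemma exists_componentsInjective_near {w v : ℝ} (hwv : w < v)
    (hloc : ∀ t ∈ Ioc w v, ∃ η, 0 < η ∧ η < t - w ∧ ComponentsInjective φ (t - η) (t + η))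
    {δ : ℝ} (hδ : 0 < δ) : ∃ ε, 0 < ε ∧ ε < δ ∧ ComponentsInjective φ (w + ε) v := by
  set A := {s | w < s ∧ s ≤ v ∧ ComponentsInjective φ s v}
  have hvA : v ∈ A := ⟨hwv, le_rfl, componentsInjective_refl φ v⟩
  have hbdd : BddBelow A := ⟨w, fun s hs => hs.1.le⟩
  have hinf : sInf A ≤ w := by
    by_contra! hw
    obtain ⟨η, hη, hηw, hinj⟩ := hloc (sInf A) ⟨hw, csInf_le hbdd hvA⟩
    obtain ⟨s, hsA, hslt⟩ := exists_lt_of_csInf_lt ⟨v, hvA⟩ (lt_add_of_pos_right _ hη)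
    have hle : sInf A - η ≤ s := by linarith [csInf_le hbdd hsA]
    have hmem : sInf A - η ∈ A :=
      ⟨by linarith, by linarith [hsA.2.1], (hinj.of_trans hle hslt.le).trans hle hsA.2.1 hsA.2.2⟩
    linarith [csInf_le hbdd hmem]
  obtain ⟨s, ⟨hws, -, hs⟩, hslt⟩ := exists_lt_of_csInf_lt ⟨v, hvA⟩ (by linarith : sInf A < w + δ)
  exact ⟨s - w, by linarith, by linarith, by rwa [add_sub_cancel]⟩

lemma sizeFun_eq_ncard_image (φ : X → ℝ) (u v : ℝ) :
    sizeFun φ u v = (connectedComponent '' {p : {x | φ x ≤ v} | φ p ≤ u}).ncard := by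
  unfold sizeFun
  congr 1
  ext c
  exact exists_congr fun p => and_congr_right fun _ => eq_comm

lemma finite_image_connectedComponent_sublevel [CompactSpace X] [LocallyConnectedSpace X]
    (hφ : Continuous φ) {u v : ℝ} (huv : u < v) :
    (connectedComponent '' {p : {x | φ x ≤ v} | φ p ≤ u}).Finite := by
  have hK : IsCompact {p : {x | φ x ≤ v} | φ p ≤ u} :=
    (isClosed_le hφ continuous_const).isClosedEmbedding_subtypeVal.isCompact_preimage
      (isCompact_sublevel hφ _)
  have hint : ∀ p ∈ {p : {x | φ x ≤ v} | φ p ≤ u}, (p : X) ∈ interior {x | φ x ≤ v} :=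
    fun p hp => interior_maximal (t := {x | φ x < v}) (fun x (hx : φ x < v) => hx.le)
      (isOpen_lt hφ continuous_const) (lt_of_le_of_lt hp huv)
  exact hK.finite_image_connectedComponent fun p hp =>
    connectedComponent_mem_nhds_of_mem_interior (hint p hp)

lemma sizeFun_lt_sizeFun [CompactSpace X] [LocallyConnectedSpace X] (hφ : Continuous φ)
    {u s v : ℝ} (hus : u ≤ s) (hsv : s < v) (hinj : ComponentsInjective φ s v)
    (hns : ¬ Surjective (ConnectedComponents.inclusion (sublevel_mono φ hus))) :
    sizeFun φ u v < sizeFun φ s v := by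
  rw [sizeFun_eq_ncard_image, sizeFun_eq_ncard_image]
  have hsub : connectedComponent '' {p : {x | φ x ≤ v} | φ p ≤ u} ⊆
      connectedComponent '' {p : {x | φ x ≤ v} | φ p ≤ s} :=
    image_mono fun _ hp => le_trans hp hus
  refine ncard_lt_ncard ((ssubset_iff_of_subset hsub).2 ?_)
    (finite_image_connectedComponent_sublevel hφ hsv)
  obtain ⟨c, hc⟩ := not_forall.mp hns
  obtain ⟨p, rfl⟩ := ConnectedComponents.surjective_coe c
  refine ⟨_, ⟨Set.inclusion (sublevel_mono φ hsv.le) p, p.2, rfl⟩, ?_⟩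
  rintro ⟨q, hqu, hqp⟩
  refine hc ⟨.mk ⟨q, hqu⟩, hinj (sublevel_mono φ hsv.le) ?_⟩
  exact ConnectedComponents.coe_eq_coe.mpr hqp

end Sublevel

lemma Set.Finite.exists_gt_forall_Ioc_notMem {S : Set ℝ} (hS : S.Finite) (w : ℝ) :
    ∃ v > w, ∀ t ∈ Ioc w v, t ∉ S := by
  have hnhds : (S \ {w})ᶜ ∈ 𝓝[>] w :=
    mem_nhdsWithin_of_mem_nhds (hS.sdiff.isClosed.compl_mem_nhds fun h => h.2 rfl)
  obtain ⟨v, hwv, hsub⟩ := mem_nhdsGT_iff_exists_Ioc_subset.mp hnhds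
  exact ⟨v, hwv, fun t ht htS => hsub ht ⟨htS, ht.1.ne'⟩⟩

lemma eventually_eq_of_continuousAt_natCast {f : ℝ → ℕ} {w : ℝ}
    (h : ContinuousAt (fun u => (f u : ℝ)) w) : ∀ᶠ u in 𝓝 w, f u = f w := by
  have : ContinuousAt f w := Nat.isClosedEmbedding_coe_real.isInducing.continuousAt_iff.mpr h
  simpa [ContinuousAt, nhds_discrete] using this

/-- Proposition 3.11 (i): let `(X, φ)` be a size pair with at most
finitely many homological 0-critical values, and let `w` be a homological 0-critical
value. If the inclusion-induced map `ι₀^{w−ε,w+ε} : Ȟ₀(X_{w−ε}) → Ȟ₀(X_{w+ε})` is not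
surjective for any sufficiently small `ε > 0`, then there exists `v > w` such that `w` is
a discontinuity point of `u ↦ ℓ_{(X,φ)}(u, v)`. -/
theorem exists_discontinuity_first_var {X : Type u} [TopologicalSpace X] [CompactSpace X]
    [LocallyConnectedSpace X] {K : Type v} [Field K]
    (C : CechTheory X K) {φ : X → ℝ} (hφ : Continuous φ)
    (hfin : {w : ℝ | C.IsHomCritical φ w}.Finite)
    {w : ℝ}
    (hnsurj : ∃ ε₀ > (0 : ℝ), ∀ ε : ℝ, ∀ hε : 0 < ε, ε < ε₀ →
      ¬ Function.Surjective (C.map (show {x : X | φ x ≤ w - ε} ⊆ {x : X | φ x ≤ w + ε} from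
        fun x (hx : φ x ≤ w - ε) => show φ x ≤ w + ε from le_trans hx (by linarith)))) :
    ∃ v > w, ¬ ContinuousAt (fun u : ℝ => (sizeFun φ u v : ℝ)) w := by
  obtain ⟨ε₀, hε₀, hns⟩ := hnsurj
  obtain ⟨v, hwv, hnc⟩ := hfin.exists_gt_forall_Ioc_notMem w
  refine ⟨v, hwv, fun hcont => ?_⟩
  obtain ⟨δ, hδ, hconst⟩ :=
    Metric.eventually_nhds_iff.mp (eventually_eq_of_continuousAt_natCast hcont)
  obtain ⟨ε, hε, hεlt, hinj⟩ := exists_componentsInjective_near hwv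
    (fun t ht => C.exists_componentsInjective_of_not_isHomCritical hφ (hnc t ht) (sub_pos.2 ht.1))
    (lt_min (lt_min hδ hε₀) (sub_pos.2 hwv))
  simp only [lt_min_iff] at hεlt
  obtain ⟨⟨hεδ, hεε₀⟩, hεv⟩ := hεlt
  have hjump := sizeFun_lt_sizeFun hφ (by linarith) (by linarith) hinj fun hs =>
    hns ε hε hεε₀ (C.surjective_map_of_surjective_inclusion (isCompact_sublevel hφ _) _ hs)
  have hlow := @hconst (w - ε) (by rw [Real.dist_eq, abs_lt]; constructor <;> linarith)
  have hhigh := @hconst (w + ε) (by rw [Real.dist_eq, abs_lt]; constructor <;> linarith)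
  omega
end

section
/- Let (X, φ) be a size pair and let u < v. The inclusion-induced map ι_0^{u,v} : Ȟ_0(X_u) → Ȟ_0(X_v) is surjective if and only if ℓ_{(X,φ)}(u, v') = ℓ_{(X,φ)}(v, v') for every v' > v. Equivalently, ι_0^{u,v} is surjective iff every connected component of X_v contains a point of X_u. -/
universe u v

/-!
Every class in `Ȟ₀(X_v)` is a combination of classes of points, and the classes of one point per
component form a basis; hence `ι₀^{u,v}` is onto iff every component of `X_v` meets `X_u`.
For `v' > v` the equality `ℓ(u, v') = ℓ(v, v')` of two finite counts says that every component of
`X_{v'}` meeting `X_v` meets `X_u`. Components only grow with the level, which gives one direction.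
Conversely, a clopen neighbourhood `A` of `p` in `X_v` is separated from its complement by
disjoint open sets whose union contains some `X_{v'}`, so the component of `p` in `X_{v'}`, and
the point of `X_u` it contains, lie in `A`; the component of `p` in `X_v` is the intersection of
all such `A`, and compactness of `X_u` yields a point of `X_u` in it.
-/

open Set Submodule

namespace CechTheory

variable {X : Type u} [TopologicalSpace X] {K : Type v} [Field K] (C : CechTheory X K)

lemma cls_mem_span_cls_image_iff {T : Set X} (hT : IsCompact T) {A : Set T} {p : T} :
    C.cls T p ∈ span K (C.cls T '' A) ↔ ∃ q ∈ A, q ∈ connectedComponent p := by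
  constructor
  · intro hp
    by_contra! hA
    let f : ConnectedComponents T → T := Function.surjInv ConnectedComponents.surjective_coe
    have hf : ∀ c, ConnectedComponents.mk (f c) = c :=
      Function.surjInv_eq ConnectedComponents.surjective_coe
    have hcls : ∀ x, C.cls T (f (ConnectedComponents.mk x)) = C.cls T x := fun x =>
      (C.cls_eq_iff T hT _ _).2 (ConnectedComponents.coe_eq_coe.1 (hf _))
    have himage : (fun c => C.cls T (f c)) '' (ConnectedComponents.mk '' A) = C.cls T '' A := by
      rw [image_image]
      simp only [hcls]
    have hpA : ConnectedComponents.mk p ∉ ConnectedComponents.mk '' A := by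
      rintro ⟨q, hq, hqp⟩
      exact hA q hq (connectedComponent_eq_iff_mem.1 (ConnectedComponents.coe_eq_coe.1 hqp))
    refine (C.cls_indep T hT f hf).notMem_span_image hpA ?_
    rwa [himage, hcls]
  · rintro ⟨q, hq, hqp⟩
    rw [(C.cls_eq_iff T hT p q).2 (connectedComponent_eq hqp)]
    exact subset_span (mem_image_of_mem _ hq)

lemma range_map_eq_span {S T : Set X} (h : S ⊆ T) (hS : IsCompact S) :
    LinearMap.range (C.map h) = span K (C.cls T '' {q | (q : X) ∈ S}) := by
  rw [LinearMap.range_eq_map, ← C.cls_span S hS, map_span, ← range_comp]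
  congr 1
  ext y
  constructor
  · rintro ⟨x, rfl⟩
    exact ⟨⟨x, h x.2⟩, x.2, (C.map_cls h x).symm⟩
  · rintro ⟨q, hq, rfl⟩
    exact ⟨⟨q, hq⟩, C.map_cls h _⟩

lemma surjective_map_iff {S T : Set X} (h : S ⊆ T) (hS : IsCompact S) (hT : IsCompact T) :
    Function.Surjective (C.map h) ↔
      ∀ p : T, ∃ q : T, (q : X) ∈ S ∧ q ∈ connectedComponent p := by
  rw [← LinearMap.range_eq_top, C.range_map_eq_span h hS, eq_top_iff, ← C.cls_span T hT,
    span_le, range_subset_iff]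
  simp only [SetLike.mem_coe, C.cls_mem_span_cls_image_iff hT]
  rfl

end CechTheory

lemma setOf_le_subset_setOf_le {X : Type u} {φ : X → ℝ} {v w : ℝ} (h : v ≤ w) :
    {x | φ x ≤ v} ⊆ {x | φ x ≤ w} :=
  fun _ hx => hx.trans h

section Topology

variable {X : Type u} [TopologicalSpace X]

lemma mem_connectedComponent_iff_mem_connectedComponentIn {T : Set X} {p q : T} :
    q ∈ connectedComponent p ↔ (q : X) ∈ connectedComponentIn T p := by
  rw [connectedComponentIn_eq_image p.2]
  exact Subtype.val_injective.mem_set_image.symm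

/-- The components of the open set `U` are open, so finitely many of them cover `S`. -/
lemma finite_setOf_connectedComponent_of_isCompact [LocallyConnectedSpace X] {S U T : Set X}
    (hS : IsCompact S) (hU : IsOpen U) (hSU : S ⊆ U) (hUT : U ⊆ T) :
    {C : Set T | ∃ p : T, (p : X) ∈ S ∧ C = connectedComponent p}.Finite := by
  obtain ⟨t, ht⟩ := hS.elim_finite_subcover (fun x : U => connectedComponentIn U x)
    (fun _ => hU.connectedComponentIn)
    (fun x hx => mem_iUnion.2 ⟨⟨x, hSU hx⟩, mem_connectedComponentIn (hSU hx)⟩)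
  refine (t.finite_toSet.image fun x : U => connectedComponent (inclusion hUT x)).subset ?_
  rintro _ ⟨p, hp, rfl⟩
  obtain ⟨x, hxt, hpx⟩ := mem_iUnion₂.1 (ht hp)
  refine ⟨x, hxt, connectedComponent_eq ?_⟩
  rw [mem_connectedComponent_iff_mem_connectedComponentIn]
  exact connectedComponentIn_mono _ hUT hpx

lemma ncard_setOf_connectedComponent_eq_iff {S R T : Set X} (hSR : S ⊆ R)
    (hfin : {C : Set T | ∃ p : T, (p : X) ∈ R ∧ C = connectedComponent p}.Finite) :
    {C : Set T | ∃ p : T, (p : X) ∈ S ∧ C = connectedComponent p}.ncard =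
        {C : Set T | ∃ p : T, (p : X) ∈ R ∧ C = connectedComponent p}.ncard ↔
      ∀ p : T, (p : X) ∈ R → ∃ q : T, (q : X) ∈ S ∧ q ∈ connectedComponent p := by
  have hsub : {C : Set T | ∃ p : T, (p : X) ∈ S ∧ C = connectedComponent p} ⊆
      {C : Set T | ∃ p : T, (p : X) ∈ R ∧ C = connectedComponent p} := by
    rintro _ ⟨p, hp, rfl⟩
    exact ⟨p, hSR hp, rfl⟩
  constructor
  · intro h p hp
    have hp' : connectedComponent p ∈
        {C : Set T | ∃ p : T, (p : X) ∈ S ∧ C = connectedComponent p} := by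
      rw [eq_of_subset_of_ncard_le hsub h.ge hfin]
      exact ⟨p, hp, rfl⟩
    obtain ⟨q, hq, hqp⟩ := hp'
    exact ⟨q, hq, hqp ▸ mem_connectedComponent⟩
  · intro h
    refine congrArg ncard (hsub.antisymm ?_)
    rintro _ ⟨p, hp, rfl⟩
    obtain ⟨q, hq, hqp⟩ := h p hp
    exact ⟨q, hq, connectedComponent_eq hqp⟩

variable {φ : X → ℝ}

lemma sizeFun_eq_iff [CompactSpace X] [LocallyConnectedSpace X] (hφ : Continuous φ)
    {u v w : ℝ} (huv : u ≤ v) (hvw : v < w) :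
    sizeFun φ u w = sizeFun φ v w ↔ ∀ p : {x | φ x ≤ w}, φ p ≤ v →
      ∃ q : {x | φ x ≤ w}, φ q ≤ u ∧ q ∈ connectedComponent p :=
  ncard_setOf_connectedComponent_eq_iff (setOf_le_subset_setOf_le huv)
    (finite_setOf_connectedComponent_of_isCompact (isClosed_le hφ continuous_const).isCompact
      (isOpen_lt hφ continuous_const) (fun _ hx => lt_of_le_of_lt hx hvw)
      (fun x (hx : φ x < w) => hx.le))

lemma exists_gt_setOf_le_subset [CompactSpace X] (hφ : Continuous φ) {v : ℝ} {O : Set X}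
    (hO : IsOpen O) (hvO : {x | φ x ≤ v} ⊆ O) : ∃ w > v, {x | φ x ≤ w} ⊆ O := by
  rcases Oᶜ.eq_empty_or_nonempty with hempty | hne
  · exact ⟨v + 1, by linarith, fun x _ => by simp [compl_empty_iff.1 hempty]⟩
  obtain ⟨x₀, hx₀, hmin⟩ := hO.isClosed_compl.isCompact.exists_isMinOn hne hφ.continuousOn
  have hvx₀ : v < φ x₀ := lt_of_not_ge fun h => hx₀ (hvO h)
  refine ⟨(v + φ x₀) / 2, by linarith, fun x hx => by_contra fun hxO => ?_⟩
  have hx₀x : φ x₀ ≤ φ x := hmin hxO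
  have hxw : φ x ≤ (v + φ x₀) / 2 := hx
  linarith

/-- A clopen neighbourhood of `p` in `X_v` and its complement are separated by disjoint open sets
`U ∪ W ⊇ X_w` for some `w > v`; the component of `p` in `X_w` then lies in `U`. -/
lemma exists_gt_connectedComponentIn_subset_of_isClopen [CompactSpace X] [T2Space X]
    (hφ : Continuous φ) {v : ℝ} {A : Set {x | φ x ≤ v}} (hA : IsClopen A)
    {p : {x | φ x ≤ v}} (hp : p ∈ A) :
    ∃ w > v, ∀ q : {x | φ x ≤ v}, (q : X) ∈ connectedComponentIn {x | φ x ≤ w} p → q ∈ A := by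
  have hV : IsClosed {x | φ x ≤ v} := isClosed_le hφ continuous_const
  have hclosed : ∀ B : Set {x | φ x ≤ v}, IsClosed B → IsClosed (Subtype.val '' B) :=
    fun B hB => hV.isClosedEmbedding_subtypeVal.isClosedMap B hB
  obtain ⟨U, W, hU, hW, hAU, hBW, hUW⟩ := normal_separation (hclosed A hA.isClosed)
    (hclosed Aᶜ hA.compl.isClosed) ((disjoint_image_iff Subtype.val_injective).2 disjoint_compl_right)
  have hVUW : {x | φ x ≤ v} ⊆ U ∪ W := by
    intro x hx
    by_cases hxA : (⟨x, hx⟩ : {x | φ x ≤ v}) ∈ A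
    · exact Or.inl (hAU ⟨_, hxA, rfl⟩)
    · exact Or.inr (hBW ⟨_, hxA, rfl⟩)
  obtain ⟨w, hvw, hwUW⟩ := exists_gt_setOf_le_subset hφ (hU.union hW) hVUW
  have hcompU : connectedComponentIn {x | φ x ≤ w} p ⊆ U :=
    isPreconnected_connectedComponentIn.subset_left_of_subset_union hU hW hUW
      ((connectedComponentIn_subset _ _).trans hwUW)
      ⟨p, mem_connectedComponentIn (p.2.trans hvw.le), hAU ⟨p, hp, rfl⟩⟩
  refine ⟨w, hvw, fun q hq => by_contra fun hqA => ?_⟩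
  exact disjoint_left.1 hUW (hcompU hq) (hBW ⟨q, hqA, rfl⟩)

/-- The component of `p` in the compact Hausdorff space `X_v` is the intersection of its clopen
neighbourhoods, so by compactness it meets the closed set `X_u` once each of them does. -/
lemma exists_mem_connectedComponentIn_of_forall_gt [CompactSpace X] [T2Space X]
    (hφ : Continuous φ) {u v : ℝ} (huv : u ≤ v) {p : X} (hp : φ p ≤ v)
    (h : ∀ w > v, ∃ q, φ q ≤ u ∧ q ∈ connectedComponentIn {x | φ x ≤ w} p) :
    ∃ q, φ q ≤ u ∧ q ∈ connectedComponentIn {x | φ x ≤ v} p := by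
  have : CompactSpace {x | φ x ≤ v} :=
    isCompact_iff_compactSpace.1 (isClosed_le hφ continuous_const).isCompact
  let Z : Set {x | φ x ≤ v} := {q | φ q ≤ u}
  suffices (Z ∩ connectedComponent ⟨p, hp⟩).Nonempty by
    obtain ⟨q, hqZ, hq⟩ := this
    exact ⟨q, hqZ, mem_connectedComponent_iff_mem_connectedComponentIn.1 hq⟩
  rw [nonempty_iff_ne_empty, connectedComponent_eq_iInter_isClopen]
  intro hempty
  obtain ⟨s, hs⟩ := (isClosed_le (hφ.comp continuous_subtype_val) continuous_const).isCompact
    |>.elim_finite_subfamily_closed _ (fun A => A.2.1.isClosed) hempty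
  let A := ⋂ i ∈ s, (i : Set {x | φ x ≤ v})
  have hA : IsClopen A := isClopen_biInter_finset fun i _ => i.2.1
  obtain ⟨w, hvw, hwA⟩ :=
    exists_gt_connectedComponentIn_subset_of_isClopen hφ hA (mem_iInter₂.2 fun i _ => i.2.2)
  obtain ⟨q, hqu, hq⟩ := h w hvw
  exact eq_empty_iff_forall_notMem.1 hs ⟨q, hqu.trans huv⟩ ⟨hqu, hwA ⟨q, hqu.trans huv⟩ hq⟩

lemma exists_mem_connectedComponent_iff_forall_gt [CompactSpace X] [T2Space X]
    (hφ : Continuous φ) {u v : ℝ} (huv : u ≤ v) (p : {x | φ x ≤ v}) :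
    (∃ q : {x | φ x ≤ v}, φ q ≤ u ∧ q ∈ connectedComponent p) ↔
      ∀ w (hvw : v < w), ∃ q : {x | φ x ≤ w}, φ q ≤ u ∧
        q ∈ connectedComponent (inclusion (setOf_le_subset_setOf_le hvw.le) p) := by
  simp only [mem_connectedComponent_iff_mem_connectedComponentIn, Subtype.exists]
  constructor
  · rintro ⟨q, -, hqu, hq⟩ w hvw
    exact ⟨q, (hqu.trans huv).trans hvw.le, hqu,
      connectedComponentIn_mono _ (setOf_le_subset_setOf_le hvw.le) hq⟩
  · intro h
    obtain ⟨q, hqu, hq⟩ := exists_mem_connectedComponentIn_of_forall_gt hφ huv p.2 fun w hvw =>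
      let ⟨q, _, hqu, hq⟩ := h w hvw
      ⟨q, hqu, hq⟩
    exact ⟨q, hqu.trans huv, hqu, hq⟩

end Topology

theorem surjective_iff_sizeFun_eq_general {X : Type u} [TopologicalSpace X] [CompactSpace X]
    [T2Space X] [LocallyConnectedSpace X] {K : Type v} [Field K]
    (C : CechTheory X K) {φ : X → ℝ} (hφ : Continuous φ) {u v : ℝ} (huv : u < v) :
    (Function.Surjective (C.map (show {x : X | φ x ≤ u} ⊆ {x : X | φ x ≤ v} from
        fun x hx => le_trans hx huv.le)) ↔
      ∀ v' > v, sizeFun φ u v' = sizeFun φ v v') ∧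
    (Function.Surjective (C.map (show {x : X | φ x ≤ u} ⊆ {x : X | φ x ≤ v} from
        fun x hx => le_trans hx huv.le)) ↔
      ∀ p : ↥{x : X | φ x ≤ v}, ∃ q : ↥{x : X | φ x ≤ v},
        φ (q : X) ≤ u ∧ q ∈ connectedComponent p) := by
  have hsurj := C.surjective_map_iff (setOf_le_subset_setOf_le huv.le)
    (isClosed_le hφ continuous_const).isCompact (isClosed_le hφ continuous_const).isCompact
  refine ⟨hsurj.trans ?_, hsurj⟩
  constructor
  · intro h w hvw
    exact (sizeFun_eq_iff hφ huv.le hvw).2 fun p hp =>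
      (exists_mem_connectedComponent_iff_forall_gt hφ huv.le ⟨p, hp⟩).1 (h ⟨p, hp⟩) w hvw
  · intro h p
    exact (exists_mem_connectedComponent_iff_forall_gt hφ huv.le p).2 fun w hvw =>
      (sizeFun_eq_iff hφ huv.le hvw).1 (h w hvw) _ p.2

/-- Proposition 3.12: for a size pair `(X, φ)` and `u < v`, the
inclusion-induced map `ι₀^{u,v} : Ȟ₀(X_u) → Ȟ₀(X_v)` is surjective iff
`ℓ_{(X,φ)}(u, v') = ℓ_{(X,φ)}(v, v')` for every `v' > v`; equivalently, iff every
connected component of `X_v` contains a point of `X_u`. -/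
theorem surjective_iff_sizeFun_eq {X : Type u} [TopologicalSpace X] [CompactSpace X]
    [T2Space X] [LocallyConnectedSpace X] [Nonempty X] {K : Type v} [Field K]
    (C : CechTheory X K) {φ : X → ℝ} (hφ : Continuous φ) {u v : ℝ} (huv : u < v) :
    (Function.Surjective (C.map (show {x : X | φ x ≤ u} ⊆ {x : X | φ x ≤ v} from
        fun x hx => le_trans hx huv.le)) ↔
      ∀ v' > v, sizeFun φ u v' = sizeFun φ v v') ∧
    (Function.Surjective (C.map (show {x : X | φ x ≤ u} ⊆ {x : X | φ x ≤ v} from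
        fun x hx => le_trans hx huv.le)) ↔
      ∀ p : ↥{x : X | φ x ≤ v}, ∃ q : ↥{x : X | φ x ≤ v},
        φ (q : X) ≤ u ∧ q ∈ connectedComponent p) :=
  surjective_iff_sizeFun_eq_general C hφ huv
end

section
/- Let (X, φ) be a size pair, u < v, and let (v_n) be a strictly decreasing sequence of reals converging to v. Let p ∈ X_v and suppose that for each n there exists q_n ∈ X_u such that p and q_n lie in the same connected component of X_{v_n}. Then there exists q ∈ X_u such that p and q lie in the same connected component of X_v. -/
/-!
The sublevel set `X_v` is the intersection of the decreasing sequence of compact sets `X_{v_n}`.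
In a compact Hausdorff space a component of such an intersection is the intersection of the
components: the intersection of a directed family of closed preconnected sets is preconnected,
because a neighbourhood of the intersection given by a separation already contains one member of
the family. So it suffices to find a point of `X_u` in every component `C_n` of `p` in `X_{v_n}`
at once, and the sets `C_n ∩ X_u` form a decreasing sequence of nonempty compact sets.
-/

open Set Topology

section

variable {X : Type*} [TopologicalSpace X]

theorem IsClosed.connectedComponentIn {F : Set X} (hF : IsClosed F) (x : X) :
    IsClosed (connectedComponentIn F x) := by
  by_cases hx : x ∈ F
  · refine isClosed_of_closure_subset ?_
    exact isPreconnected_connectedComponentIn.closure.subset_connectedComponentIn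
      (subset_closure (mem_connectedComponentIn hx))
      (closure_minimal (connectedComponentIn_subset F x) hF)
  · rw [connectedComponentIn_eq_empty hx]
    exact isClosed_empty

theorem isPreconnected_iInter_of_directed [CompactSpace X] [T2Space X] {ι : Type*} [Nonempty ι]
    {V : ι → Set X} (hV : Directed (· ⊇ ·) V) (hclosed : ∀ i, IsClosed (V i))
    (hconn : ∀ i, IsPreconnected (V i)) : IsPreconnected (⋂ i, V i) := by
  rw [isPreconnected_iff_subset_of_fully_disjoint_closed (isClosed_iInter hclosed)]
  intro t₁ t₂ ht₁ ht₂ hcover hdisj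
  obtain ⟨U₁, U₂, hU₁, hU₂, ht₁U₁, ht₂U₂, hU⟩ := normal_separation ht₁ ht₂ hdisj
  have hnhds : ∀ x ∈ ⋂ i, V i, U₁ ∪ U₂ ∈ 𝓝 x := fun x hx =>
    (hU₁.union hU₂).mem_nhds (union_subset_union ht₁U₁ ht₂U₂ (hcover hx))
  obtain ⟨i, hi⟩ := exists_subset_nhds_of_compactSpace hV hclosed hnhds
  have hVi : ∀ x ∈ ⋂ i, V i, x ∈ V i := fun x hx => mem_iInter.1 hx i
  rcases (hconn i).subset_or_subset hU₁ hU₂ hU hi with h | h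
  · refine Or.inl fun x hx => (hcover hx).resolve_right fun hx₂ => ?_
    exact hU.ne_of_mem (h (hVi x hx)) (ht₂U₂ hx₂) rfl
  · refine Or.inr fun x hx => (hcover hx).resolve_left fun hx₁ => ?_
    exact hU.ne_of_mem (ht₁U₁ hx₁) (h (hVi x hx)) rfl

theorem connectedComponentIn_iInter_of_directed [CompactSpace X] [T2Space X] {ι : Type*}
    [Nonempty ι] {F : ι → Set X} (hF : Directed (· ⊇ ·) F) (hclosed : ∀ i, IsClosed (F i))
    (x : X) : connectedComponentIn (⋂ i, F i) x = ⋂ i, connectedComponentIn (F i) x := by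
  refine (subset_iInter fun i => connectedComponentIn_mono x (iInter_subset F i)).antisymm ?_
  intro y hy
  have hx : x ∈ ⋂ i, F i :=
    mem_iInter.2 fun i => connectedComponentIn_nonempty_iff.1 ⟨y, mem_iInter.1 hy i⟩
  have hdir : Directed (· ⊇ ·) fun i => connectedComponentIn (F i) x :=
    fun i j => (hF i j).imp fun _ hk =>
      ⟨connectedComponentIn_mono x hk.1, connectedComponentIn_mono x hk.2⟩
  refine (isPreconnected_iInter_of_directed hdir (fun i => (hclosed i).connectedComponentIn x)
    fun _ => isPreconnected_connectedComponentIn).subset_connectedComponentIn ?_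
    (iInter_mono fun i => connectedComponentIn_subset (F i) x) hy
  exact mem_iInter.2 fun i => mem_connectedComponentIn (mem_iInter.1 hx i)
end

theorem exists_point_in_component_of_limit_general {X : Type*} [TopologicalSpace X]
    [CompactSpace X] [T2Space X]
    {φ : X → ℝ} (hφ : Continuous φ) {u v : ℝ}
    (vs : ℕ → ℝ) (hanti : StrictAnti vs)
    (hlim : Filter.Tendsto vs Filter.atTop (nhds v))
    {p : X}
    (hq : ∀ n : ℕ, ∃ q : X, φ q ≤ u ∧ q ∈ connectedComponentIn {x : X | φ x ≤ vs n} p) :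
    ∃ q : X, φ q ≤ u ∧ q ∈ connectedComponentIn {x : X | φ x ≤ v} p := by
  have hsublevel : {x : X | φ x ≤ v} = ⋂ n, {x : X | φ x ≤ vs n} := by
    ext x
    simp only [mem_ofPred_eq, mem_iInter]
    exact ⟨fun hx n => hx.trans (hanti.antitone.le_of_tendsto hlim n),
      fun hx => ge_of_tendsto' hlim hx⟩
  have hanti_sublevel : Antitone fun n => {x : X | φ x ≤ vs n} :=
    fun _ _ hmn _ hx => le_trans hx (hanti.antitone hmn)
  have hclosed : ∀ {w : ℝ}, IsClosed {x : X | φ x ≤ w} := isClosed_le hφ continuous_const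
  rw [hsublevel, connectedComponentIn_iInter_of_directed hanti_sublevel.directed_ge
    (fun _ => hclosed) p]
  set C : ℕ → Set X := fun n => connectedComponentIn {x : X | φ x ≤ vs n} p
  have hCu_anti : Antitone fun n => C n ∩ {x : X | φ x ≤ u} := fun _ _ hmn =>
    inter_subset_inter_left _ (connectedComponentIn_mono p (hanti_sublevel hmn))
  have hCu_closed : ∀ n, IsClosed (C n ∩ {x : X | φ x ≤ u}) := fun n =>
    (hclosed.connectedComponentIn p).inter hclosed
  obtain ⟨q, hqC⟩ := IsCompact.nonempty_iInter_of_directed_nonempty_isCompact_isClosed _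
    hCu_anti.directed_ge (fun n => (hq n).imp fun _ h => ⟨h.2, h.1⟩)
    (fun n => (hCu_closed n).isCompact) hCu_closed
  rw [← iInter_inter] at hqC
  exact ⟨q, hqC.2, hqC.1⟩

/-- for a size pair `(X, φ)`, `u < v`, and a strictly decreasing
sequence `v_n → v`: if `p ∈ X_v` and for every `n` some `q_n ∈ X_u` lies in the same
connected component of `X_{v_n}` as `p`, then some `q ∈ X_u` lies in the same connected
component of `X_v` as `p`. -/
theorem exists_point_in_component_of_limit {X : Type*} [TopologicalSpace X]
    [CompactSpace X] [T2Space X] [LocallyConnectedSpace X] [Nonempty X]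
    {φ : X → ℝ} (hφ : Continuous φ) {u v : ℝ} (huv : u < v)
    (vs : ℕ → ℝ) (hanti : StrictAnti vs)
    (hlim : Filter.Tendsto vs Filter.atTop (nhds v))
    {p : X} (hp : φ p ≤ v)
    (hq : ∀ n : ℕ, ∃ q : X, φ q ≤ u ∧ q ∈ connectedComponentIn {x : X | φ x ≤ vs n} p) :
    ∃ q : X, φ q ≤ u ∧ q ∈ connectedComponentIn {x : X | φ x ≤ v} p :=
  exists_point_in_component_of_limit_general hφ vs hanti hlim hq
end

section
/- In the setting X = A ∪ B with the standing hypotheses, for every u < v the inequality ℓ_{(X,φ)}(u,v) ≤ ℓ_{(A,φ|A)}(u,v) + ℓ_{(B,φ|B)}(u,v) holds. -/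
/-!
A component of `X_v` meeting `X_u` contains a point of `A_u` or of `B_u`, and with it that
point's component in `A_v` (resp. `B_v`); so the map sending a component of `A_v` or `B_v` to
the component of `X_v` containing it hits every component counted on the left. The counts on
`A` and `B` are finite: by local connectedness, the component in `A ∩ {φ < v}` of a point of
`A_u` is open in `A`, and finitely many of these cover the compact set `A_u`. The comparison is
done with `encard`, since `ncard` gives the junk value `0` to an infinite set.
-/

/-- The relative size function: `sizeFunOn S φ u v` is the number of connected components
of the sublevel set `S_v = S ∩ {φ ≤ v}` containing at least one point of
`S_u = S ∩ {φ ≤ u}`. -/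
noncomputable def sizeFunOn {X : Type*} [TopologicalSpace X] (S : Set X) (φ : X → ℝ)
    (u v : ℝ) : ℕ :=
  Set.ncard {C : Set ↥(S ∩ {x : X | φ x ≤ v}) |
    ∃ p : ↥(S ∩ {x : X | φ x ≤ v}), φ (p : X) ≤ u ∧ C = connectedComponent p}

open Set Topology

theorem Set.encard_image_le_encard_image_of_factor {α β γ : Type*} {f : α → β} {g : α → γ}
    {s : Set α} (hfg : ∀ x ∈ s, ∀ y ∈ s, f x = f y → g x = g y) :
    (g '' s).encard ≤ (f '' s).encard := by
  rcases s.eq_empty_or_nonempty with rfl | ⟨a, -⟩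
  · simp
  have : Nonempty α := ⟨a⟩
  have hmem : ∀ C ∈ g '' s, Function.invFunOn g s C ∈ s := fun _ hC => Function.invFunOn_mem hC
  have heq : ∀ C ∈ g '' s, g (Function.invFunOn g s C) = C := fun _ hC => Function.invFunOn_eq hC
  refine encard_le_encard_of_injOn (f := f ∘ Function.invFunOn g s)
    (fun C hC => mem_image_of_mem f (hmem C hC)) fun C hC D hD hCD => ?_
  rw [← heq C hC, ← heq D hD]
  exact hfg _ (hmem C hC) _ (hmem D hD) hCD

section Components

variable {α β : Type*} [TopologicalSpace α] [TopologicalSpace β]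

theorem ContinuousOn.connectedComponentIn_eq_of_mapsTo {e : α → β} {F : Set α} {G : Set β}
    (he : ContinuousOn e F) (hFG : MapsTo e F G) {x y : α} (hy : y ∈ F)
    (hxy : connectedComponentIn F x = connectedComponentIn F y) :
    connectedComponentIn G (e x) = connectedComponentIn G (e y) := by
  have hyx : y ∈ connectedComponentIn F x := hxy ▸ mem_connectedComponentIn hy
  have hx : x ∈ F := connectedComponentIn_nonempty_iff.mp ⟨y, hyx⟩
  apply connectedComponentIn_eq
  exact connectedComponentIn_mono _ hFG.image_subset
    (he.image_connectedComponentIn_subset hx (mem_image_of_mem e hyx))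

theorem encard_image_connectedComponentIn_le_of_subset {F G s : Set α} (hFG : F ⊆ G)
    (hs : s ⊆ F) : (connectedComponentIn G '' s).encard ≤ (connectedComponentIn F '' s).encard :=
  encard_image_le_encard_image_of_factor fun _ _ _ hy hxy =>
    continuousOn_id.connectedComponentIn_eq_of_mapsTo hFG (hs hy) hxy

theorem IsCompact.finite_image_connectedComponentIn [LocallyConnectedSpace α] {K F : Set α}
    (hK : IsCompact K) (hKF : K ⊆ interior F) : (connectedComponentIn F '' K).Finite := by
  obtain ⟨t, -, hcover⟩ := hK.elim_nhds_subcover (connectedComponentIn F)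
    fun x hx => connectedComponentIn_mem_nhds (mem_interior_iff_mem_nhds.mp (hKF hx))
  refine (t.finite_toSet.image (connectedComponentIn F)).subset ?_
  rintro _ ⟨y, hy, rfl⟩
  obtain ⟨x, hxt, hyx⟩ := mem_iUnion₂.mp (hcover hy)
  exact ⟨x, hxt, connectedComponentIn_eq hyx⟩

end Components

section Sublevel

variable {X : Type*} [TopologicalSpace X] {φ : X → ℝ} {u v : ℝ}

theorem sizeFunOn_eq_ncard_image_connectedComponentIn (S : Set X) (huv : u ≤ v) :
    sizeFunOn S φ u v =
      (connectedComponentIn (S ∩ {x | φ x ≤ v}) '' (S ∩ {x | φ x ≤ u})).ncard := by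
  set Y := S ∩ {x | φ x ≤ v}
  have hcomp : {C : Set Y | ∃ p : Y, φ p ≤ u ∧ C = connectedComponent p} =
      connectedComponent '' {p : Y | φ p ≤ u} := by
    ext C
    simp only [mem_ofPred_eq, mem_image, eq_comm (a := C)]
  have hYu : (Subtype.val '' {p : Y | φ p ≤ u} : Set X) = S ∩ {x | φ x ≤ u} := by
    ext x
    simp only [mem_image, mem_ofPred_eq, mem_inter_iff, Subtype.exists, exists_and_right,
      exists_eq_right, Y]
    exact ⟨fun ⟨⟨hS, _⟩, hu⟩ => ⟨hS, hu⟩, fun ⟨hS, hu⟩ => ⟨⟨hS, hu.trans huv⟩, hu⟩⟩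
  rw [sizeFunOn, hcomp, ← ncard_image_of_injective _ Subtype.val_injective.image_injective,
    image_image, ← hYu, image_image]
  exact congrArg ncard (image_congr fun p _ => (connectedComponentIn_eq_image p.2).symm)

theorem finite_image_connectedComponentIn_sublevel [CompactSpace X] {S : Set X} (hS : IsClosed S)
    [LocallyConnectedSpace S] (hφ : Continuous φ) (huv : u < v) :
    (connectedComponentIn (S ∩ {x | φ x ≤ v}) '' (S ∩ {x | φ x ≤ u})).Finite := by
  have : CompactSpace S := isCompact_iff_compactSpace.mp hS.isCompact
  have hφS : Continuous fun a : S => φ a := hφ.comp continuous_subtype_val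
  have hK : IsCompact {a : S | φ a ≤ u} := (isClosed_le hφS continuous_const).isCompact
  have hKF : {a : S | φ a ≤ u} ⊆ interior {a : S | φ a ≤ v} :=
    calc {a : S | φ a ≤ u} ⊆ {a : S | φ a < v} := fun _ ha => lt_of_le_of_lt ha huv
      _ ⊆ interior {a : S | φ a ≤ v} :=
        (isOpen_lt hφS continuous_const).subset_interior_iff.mpr fun _ (hb : _ < v) => hb.le
  rw [← Subtype.image_preimage_coe S {x | φ x ≤ u}, image_image]
  refine (hK.finite_image_connectedComponentIn hKF).finite_of_encard_le
    (encard_image_le_encard_image_of_factor fun _ _ _ hb hab =>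
      continuous_subtype_val.continuousOn.connectedComponentIn_eq_of_mapsTo
        (F := {a : S | φ a ≤ v}) (G := S ∩ {x | φ x ≤ v}) (fun c hc => ⟨c.2, hc⟩)
        (le_trans hb huv.le) hab)

end Sublevel

theorem sizeFun_union_le_general {X : Type*} [TopologicalSpace X] [CompactSpace X]
    {A B : Set X} (hA : IsClosed A) (hB : IsClosed B) (hUnion : A ∪ B = Set.univ)
    [LocallyConnectedSpace ↥A] [LocallyConnectedSpace ↥B]
    {φ : X → ℝ} (hφ : Continuous φ) {u v : ℝ} (huv : u < v) :
    sizeFunOn Set.univ φ u v ≤ sizeFunOn A φ u v + sizeFunOn B φ u v := by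
  simp only [sizeFunOn_eq_ncard_image_connectedComponentIn _ huv.le]
  have hAfin := finite_image_connectedComponentIn_sublevel hA hφ huv
  have hBfin := finite_image_connectedComponentIn_sublevel hB hφ huv
  have hsplit : univ ∩ {x | φ x ≤ u} = A ∩ {x | φ x ≤ u} ∪ B ∩ {x | φ x ≤ u} := by
    rw [← union_inter_distrib_right, hUnion]
  have hsub : ∀ S : Set X, S ∩ {x | φ x ≤ u} ⊆ S ∩ {x | φ x ≤ v} := fun S =>
    inter_subset_inter_right S fun _ hx => le_trans hx huv.le
  refine (encard_le_coe_iff_finite_ncard_le.mp ?_).2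
  rw [Nat.cast_add, hAfin.cast_ncard_eq, hBfin.cast_ncard_eq, hsplit, image_union]
  refine (encard_union_le _ _).trans (add_le_add ?_ ?_) <;>
    exact encard_image_connectedComponentIn_le_of_subset
      (inter_subset_inter_left _ (subset_univ _)) (hsub _)

/-- for `X = A ∪ B` with the standing hypotheses (X compact Hausdorff
locally connected, A, B closed locally connected with `X = int A ∪ int B`, `A ∩ B`
locally connected, φ continuous), for every `u < v`,
`ℓ_{(X,φ)}(u,v) ≤ ℓ_{(A,φ|A)}(u,v) + ℓ_{(B,φ|B)}(u,v)`. -/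
theorem sizeFun_union_le {X : Type*} [TopologicalSpace X] [CompactSpace X] [T2Space X]
    [LocallyConnectedSpace X] [Nonempty X]
    {A B : Set X} (hA : IsClosed A) (hB : IsClosed B) (hUnion : A ∪ B = Set.univ)
    (hInt : interior A ∪ interior B = Set.univ)
    [LocallyConnectedSpace ↥A] [LocallyConnectedSpace ↥B]
    [LocallyConnectedSpace ↥(A ∩ B)]
    {φ : X → ℝ} (hφ : Continuous φ) {u v : ℝ} (huv : u < v) :
    sizeFunOn Set.univ φ u v ≤ sizeFunOn A φ u v + sizeFunOn B φ u v :=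
  sizeFun_union_le_general hA hB hUnion hφ huv
end
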